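/- arXiv:2504.00722 — 4 statements merged into one kernel-verified Lean document; each statement's English description precedes it below -/
import Mathlib

section
/- If β̂ ∈ ℝ^p is a global minimizer of l_λ(β) = (1/(2N))‖Xβ − y‖₂² + λ‖β‖₀, then for each i, setting g_i = X_iᵀX_i/N and d_i = X_iᵀ(y − Xβ̂)/N, one has β̂_i = H_λ(√g_i·|β̂_i + d_i|), where H_λ maps to 0 when √g_i|β̂_i + d_i| < √(2λ) and to β̂_i when √g_i|β̂_i + d_i| ≥ √(2λ). -/
open Finset

/-- a global minimizer of the ℓ₀-penalized least squares satisfies the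
hard-thresholding fixed-point equation `β̂_i = H_λ(√g_i |β̂_i + d_i|)`. -/
theorem global_min_satisfies_hard_threshold (N p : ℕ) (hN : 0 < N)
    (lam : ℝ) (hlam : 0 < lam)
    (X : Matrix (Fin N) (Fin p) ℝ) (y : Fin N → ℝ)
    (hX : ∀ i, 0 < ∑ k, X k i * X k i)
    (βh : Fin p → ℝ)
    (hmin : ∀ β : Fin p → ℝ,
      (1 / (2 * (N : ℝ))) * ∑ k, ((∑ j, X k j * βh j) - y k) ^ 2
          + lam * ((univ.filter fun i => βh i ≠ 0).card : ℝ)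
      ≤ (1 / (2 * (N : ℝ))) * ∑ k, ((∑ j, X k j * β j) - y k) ^ 2
          + lam * ((univ.filter fun i => β i ≠ 0).card : ℝ)) :
    ∀ i : Fin p,
      βh i =
        if Real.sqrt ((∑ k, X k i * X k i) / N) *
            |βh i + (∑ k, X k i * (y k - ∑ j, X k j * βh j)) / N|
            < Real.sqrt (2 * lam)
        then 0 else βh i := by
  intro i
  by_cases h0 : βh i = 0
  · simp [h0]
  · -- notation
    set S : ℝ := ∑ k, X k i * X k i with hS
    set D : ℝ := ∑ k, X k i * (y k - ∑ j, X k j * βh j) with hDdef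
    set R : ℝ := ∑ k, ((∑ j, X k j * βh j) - y k) ^ 2 with hR
    have hSpos : 0 < S := hX i
    have hNpos : (0 : ℝ) < N := by exact_mod_cast hN
    -- key expansion
    have key : ∀ t : ℝ, ∑ k, ((∑ j, X k j * Function.update βh i t j) - y k) ^ 2
        = R - 2 * (t - βh i) * D + (t - βh i) ^ 2 * S := by
      intro t
      have h1 : ∀ k, (∑ j, X k j * Function.update βh i t j)
          = (∑ j, X k j * βh j) + X k i * (t - βh i) := by
        intro k
        have : (∑ j, X k j * Function.update βh i t j)
            = ∑ j, (X k j * βh j + if j = i then X k i * (t - βh i) else 0) := by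
          refine Finset.sum_congr rfl fun j _ => ?_
          by_cases h : j = i
          · subst h; simp [Function.update_apply]; ring
          · simp [Function.update_apply, h]
        rw [this, Finset.sum_add_distrib, Finset.sum_ite_eq' univ i
          (fun _ => X k i * (t - βh i))]
        simp
      have h2 : ∑ k, ((∑ j, X k j * Function.update βh i t j) - y k) ^ 2
          = ∑ k, (((∑ j, X k j * βh j) - y k) ^ 2
              - 2 * (t - βh i) * (X k i * (y k - ∑ j, X k j * βh j))
              + (t - βh i) ^ 2 * (X k i * X k i)) := by
        refine Finset.sum_congr rfl fun k _ => ?_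
        rw [h1 k]; ring
      rw [h2]
      rw [Finset.sum_add_distrib, Finset.sum_sub_distrib, ← Finset.mul_sum, ← Finset.mul_sum]
    -- the card comparison when updating coordinate i (βh i ≠ 0): never increases
    have hcard_le : ∀ t : ℝ,
        ((univ.filter fun j => Function.update βh i t j ≠ 0).card : ℝ)
          ≤ ((univ.filter fun j => βh j ≠ 0).card : ℝ) := by
      intro t
      have : (univ.filter fun j => Function.update βh i t j ≠ 0)
          ⊆ (univ.filter fun j => βh j ≠ 0) := by
        intro j hj
        simp only [Finset.mem_filter, Finset.mem_univ, true_and] at hj ⊢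
        by_cases h : j = i
        · subst h; exact h0
        · simpa [Function.update_apply, h] using hj
      exact_mod_cast Finset.card_le_card this
    -- Step 1: D = 0
    have hD0 : D = 0 := by
      have h := hmin (Function.update βh i (βh i + D / S))
      rw [key] at h
      have hc := hcard_le (βh i + D / S)
      have hrw : R - 2 * (βh i + D / S - βh i) * D + (βh i + D / S - βh i) ^ 2 * S
          = R - D ^ 2 / S := by
        field_simp; ring
      rw [hrw] at h
      have h2 : 1 / (2 * (N:ℝ)) * (D ^ 2 / S) ≤ 0 := by
        have hlc : lam * ((univ.filter fun j => Function.update βh i (βh i + D / S) j ≠ 0).card : ℝ)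
            ≤ lam * ((univ.filter fun j => βh j ≠ 0).card : ℝ) :=
          mul_le_mul_of_nonneg_left hc hlam.le
        nlinarith [h, hlc]
      have h3 : D ^ 2 / S ≤ 0 := by
        by_contra hcon
        push_neg at hcon
        exact absurd h2 (not_le.2 (mul_pos (by positivity) hcon))
      have hD2 : D ^ 2 ≤ 0 := by
        have hdm : D ^ 2 = D ^ 2 / S * S := (div_mul_cancel₀ _ hSpos.ne').symm
        rw [hdm]
        exact mul_nonpos_of_nonpos_of_nonneg h3 hSpos.le
      exact pow_eq_zero_iff two_ne_zero |>.mp (le_antisymm hD2 (sq_nonneg D))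
    -- Step 2: compare with t = 0
    have hcard0 : ((univ.filter fun j => Function.update βh i 0 j ≠ 0).card : ℝ)
        = ((univ.filter fun j => βh j ≠ 0).card : ℝ) - 1 := by
      have hset : (univ.filter fun j => Function.update βh i 0 j ≠ 0)
          = (univ.filter fun j => βh j ≠ 0).erase i := by
        ext j
        simp only [Finset.mem_filter, Finset.mem_univ, true_and, Finset.mem_erase,
          Function.update_apply]
        by_cases h : j = i <;> simp [h]
      have hi : i ∈ univ.filter fun j => βh j ≠ 0 := by
        simp [h0]
      rw [hset, Finset.card_erase_of_mem hi]
      have : 0 < (univ.filter fun j => βh j ≠ 0).card := Finset.card_pos.2 ⟨i, hi⟩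
      push_cast [Nat.cast_sub this]
      ring
    have hkey2 : 2 * lam ≤ S / N * (βh i) ^ 2 := by
      have h := hmin (Function.update βh i 0)
      rw [key, hcard0, hD0] at h
      have h' : lam ≤ 1 / (2 * (N:ℝ)) * ((0 - βh i) ^ 2 * S) := by linarith [h]
      have heq : 1 / (2 * (N:ℝ)) * ((0 - βh i) ^ 2 * S) = S / N * (βh i) ^ 2 / 2 := by
        field_simp; ring
      linarith [h', heq.le, heq.ge]
    -- conclude
    rw [if_neg]
    push_neg
    rw [hD0]
    have habs : Real.sqrt (S / N) * |βh i + 0 / N| = Real.sqrt (S / N * (βh i) ^ 2) := by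
      rw [Real.sqrt_mul (by positivity : (0:ℝ) ≤ S / N), Real.sqrt_sq_eq_abs]
      norm_num
    rw [habs]
    exact Real.sqrt_le_sqrt hkey2
end

section
/- Suppose β̂ ∈ ℝ^p, Â = {i : √g_i|β̂_i + d_i| ≥ √(2λ)} with g_i = X_iᵀX_i/N, d_i = X_iᵀ(y − Xβ̂)/N, and suppose d_i = 0 for i ∈ Â, β̂_i = 0 for i ∉ Â, and β̂ restricted to Â minimizes (1/(2N))‖X_Â β_Â − y‖₂². Then β̂ is a local minimizer of l_λ(β) = (1/(2N))‖Xβ − y‖₂² + λ‖β‖₀, i.e., there is ε > 0 such that l_λ(β̂ + h) ≥ l_λ(β̂) for all h with ‖h‖_∞ ≤ ε. -/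
open Finset

/-- the KKT-type conditions (d vanishing on the active set Â, β̂ vanishing
off Â, and β̂ minimizing the restricted least-squares problem on Â) imply that β̂ is a
local minimizer of the ℓ₀-penalized least-squares objective. -/
theorem kkt_implies_local_min (N p : ℕ) (hN : 0 < N) (lam : ℝ) (hlam : 0 < lam)
    (X : Matrix (Fin N) (Fin p) ℝ) (y : Fin N → ℝ) (βh : Fin p → ℝ)
    (g d : Fin p → ℝ)
    (hg : ∀ i, g i = (∑ k, X k i * X k i) / N)
    (hd : ∀ i, d i = (∑ k, X k i * (y k - ∑ j, X k j * βh j)) / N)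
    (A : Finset (Fin p))
    (hA : ∀ i, i ∈ A ↔ Real.sqrt (2 * lam) ≤ Real.sqrt (g i) * |βh i + d i|)
    (hdA : ∀ i ∈ A, d i = 0)
    (hβI : ∀ i ∉ A, βh i = 0)
    (hminA : ∀ β : Fin p → ℝ, (∀ i ∉ A, β i = 0) →
      (1 / (2 * (N : ℝ))) * ∑ k, ((∑ j, X k j * βh j) - y k) ^ 2
        ≤ (1 / (2 * (N : ℝ))) * ∑ k, ((∑ j, X k j * β j) - y k) ^ 2) :
    ∃ ε > 0, ∀ h : Fin p → ℝ, (∀ i, |h i| ≤ ε) →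
      (1 / (2 * (N : ℝ))) * ∑ k, ((∑ j, X k j * βh j) - y k) ^ 2
          + lam * ((univ.filter fun i => βh i ≠ 0).card : ℝ)
      ≤ (1 / (2 * (N : ℝ))) * ∑ k, ((∑ j, X k j * (βh j + h j)) - y k) ^ 2
          + lam * ((univ.filter fun i => βh i + h i ≠ 0).card : ℝ) := by
  classical
  set T : Finset (Fin p) := univ.filter (fun i => βh i ≠ 0) with hT
  have hTA : T ⊆ A := by
    intro i hi
    simp only [hT, mem_filter] at hi
    by_contra hiA
    exact hi.2 (hβI i hiA)
  set M : ℝ := ∑ i, |d i| with hM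
  have hM0 : 0 ≤ M := Finset.sum_nonneg fun i _ => abs_nonneg _
  have hMi : ∀ i, |d i| ≤ M := fun i =>
    Finset.single_le_sum (fun j _ => abs_nonneg (d j)) (mem_univ i)
  have hε1 : (0:ℝ) < lam / (M + 1) := by positivity
  set δ : ℝ := if hne : T.Nonempty then T.inf' hne (fun i => |βh i| / 2) else 1 with hδ
  have hδ0 : 0 < δ := by
    rw [hδ]
    split
    · rename_i hne
      apply (Finset.lt_inf'_iff hne).mpr
      intro i hi
      have h3 : βh i ≠ 0 := by
        have := (mem_filter.mp hi).2
        exact this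
      have : 0 < |βh i| := abs_pos.mpr h3
      linarith
    · norm_num
  have hδi : ∀ i ∈ T, δ ≤ |βh i| / 2 := by
    intro i hi
    rw [hδ, dif_pos ⟨i, hi⟩]
    exact Finset.inf'_le _ hi
  refine ⟨min (lam / (M + 1)) δ, lt_min hε1 hδ0, fun h hh => ?_⟩
  set ε := min (lam / (M + 1)) δ with hε
  have hε0 : 0 < ε := lt_min hε1 hδ0
  set S : Finset (Fin p) := univ.filter (fun i => i ∉ A ∧ h i ≠ 0) with hS
  set T' : Finset (Fin p) := univ.filter (fun i => βh i + h i ≠ 0) with hT'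
  have hTT' : T ⊆ T' := by
    intro i hi
    have h1 : |h i| ≤ ε := hh i
    have h2 : ε ≤ |βh i| / 2 := le_trans (min_le_right _ _) (hδi i hi)
    have h3 : 0 < |βh i| := abs_pos.mpr (mem_filter.mp hi).2
    simp only [hT', mem_filter, mem_univ, true_and]
    intro hc
    have hb : βh i = -h i := by linarith [hc, eq_neg_of_add_eq_zero_left hc]
    rw [hb, abs_neg] at h3 h2
    linarith
  have hST' : S ⊆ T' := by
    intro i hi
    simp only [hS, mem_filter, mem_univ, true_and] at hi
    simp only [hT', mem_filter, mem_univ, true_and]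
    rw [hβI i hi.1, zero_add]
    exact hi.2
  have hdisj : Disjoint T S := by
    rw [Finset.disjoint_left]
    intro i hiT hiS
    exact ((mem_filter.mp hiS).2).1 (hTA hiT)
  have hcard : (T.card : ℝ) + S.card ≤ T'.card := by
    have h1 : (T ∪ S).card = T.card + S.card := Finset.card_union_of_disjoint hdisj
    have h2 : (T ∪ S).card ≤ T'.card :=
      Finset.card_le_card (Finset.union_subset hTT' hST')
    exact_mod_cast h1 ▸ h2
  -- residual and perturbation
  set r : Fin N → ℝ := fun k => (∑ j, X k j * βh j) - y k with hr
  set u : Fin N → ℝ := fun k => ∑ j, X k j * h j with hu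
  have hNne : (N:ℝ) ≠ 0 := Nat.cast_ne_zero.mpr hN.ne'
  have hN0 : (0:ℝ) < N := Nat.cast_pos.mpr hN
  have hdN : ∀ j, ∑ k, X k j * r k = -((N:ℝ) * d j) := by
    intro j
    have h1 : ∑ k, X k j * r k = -∑ k, X k j * (y k - ∑ j', X k j' * βh j') := by
      rw [← Finset.sum_neg_distrib]
      apply Finset.sum_congr rfl
      intro k _
      simp only [hr]
      ring
    rw [h1, hd j]
    field_simp
  set D : ℝ := ∑ j, h j * d j with hD
  have hcross : ∑ k, r k * u k = -((N:ℝ) * D) := by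
    have h1 : ∑ k, r k * u k = ∑ j, (∑ k, X k j * r k) * h j := by
      simp only [hu, Finset.mul_sum]
      rw [Finset.sum_comm]
      apply Finset.sum_congr rfl
      intro j _
      rw [Finset.sum_mul]
      apply Finset.sum_congr rfl
      intro k _
      ring
    rw [h1]
    simp only [hdN]
    rw [hD, Finset.mul_sum, ← Finset.sum_neg_distrib]
    apply Finset.sum_congr rfl
    intro j _
    ring
  set Q : ℝ := ∑ k, (u k)^2 with hQ
  have hQ0 : 0 ≤ Q := Finset.sum_nonneg fun k _ => sq_nonneg _
  have hexp : ∑ k, ((∑ j, X k j * (βh j + h j)) - y k) ^ 2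
      = ∑ k, (r k)^2 + 2 * ∑ k, r k * u k + Q := by
    have hpt : ∀ k, ((∑ j, X k j * (βh j + h j)) - y k) = r k + u k := by
      intro k
      simp only [hr, hu, mul_add, Finset.sum_add_distrib]
      ring
    calc ∑ k, ((∑ j, X k j * (βh j + h j)) - y k) ^ 2
        = ∑ k, ((r k)^2 + 2 * (r k * u k) + (u k)^2) := by
          apply Finset.sum_congr rfl
          intro k _
          rw [hpt k]
          ring
      _ = ∑ k, (r k)^2 + 2 * ∑ k, r k * u k + Q := by
          rw [Finset.sum_add_distrib, Finset.sum_add_distrib, Finset.mul_sum]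
  -- D restricted to S
  have hDS : D = ∑ j ∈ S, h j * d j := by
    rw [hD]
    symm
    apply Finset.sum_subset S.subset_univ
    intro j _ hjS
    simp only [hS, mem_filter, mem_univ, true_and, not_and_or, not_not] at hjS
    rcases hjS with hj | hj
    · rw [hdA j hj, mul_zero]
    · rw [hj, zero_mul]
  have hDle : D ≤ lam * S.card := by
    rw [hDS]
    calc ∑ j ∈ S, h j * d j ≤ ∑ j ∈ S, lam := by
          apply Finset.sum_le_sum
          intro j _
          have h1 : h j * d j ≤ |h j * d j| := le_abs_self _
          have h2 : |h j * d j| = |h j| * |d j| := abs_mul _ _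
          have h3 : |h j| * |d j| ≤ ε * M :=
            mul_le_mul (hh j) (hMi j) (abs_nonneg _) hε0.le
          have h4 : ε * (M + 1) ≤ lam := by
            have := min_le_left (lam / (M + 1)) δ
            rw [← hε] at this
            have hM1 : (0:ℝ) < M + 1 := by linarith
            calc ε * (M + 1) ≤ lam / (M + 1) * (M + 1) := by
                  apply mul_le_mul_of_nonneg_right this hM1.le
              _ = lam := by field_simp
          nlinarith
      _ = lam * S.card := by rw [Finset.sum_const, nsmul_eq_mul]; ring
  have key : (1 / (2 * (N : ℝ))) * ∑ k, ((∑ j, X k j * (βh j + h j)) - y k) ^ 2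
      = (1 / (2 * (N : ℝ))) * ∑ k, (r k)^2 - D + (1/(2*(N:ℝ))) * Q := by
    rw [hexp, hcross]
    field_simp
    ring
  have hrgoal : ∑ k, ((∑ j, X k j * βh j) - y k) ^ 2 = ∑ k, (r k)^2 := by
    apply Finset.sum_congr rfl; intro k _; rw [hr]
  rw [key, hrgoal]
  have hQ2 : 0 ≤ (1/(2*(N:ℝ))) * Q := by positivity
  have hlamcard : lam * ((T.card : ℝ) + S.card) ≤ lam * T'.card :=
    mul_le_mul_of_nonneg_left hcard hlam.le
  nlinarith [hDle, hQ2, hlamcard]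
end

section
/- Let θ_{a,b} be the sparse orthogonality constant of X, i.e. ‖X_Aᵀ X_B u‖₂ ≤ N·θ_{a,b}·‖u‖₂ for all disjoint A, B with |A| ≤ a, |B| ≤ b and all u ∈ ℝ^{|B|}. If X satisfies the SRC of order a + b with bounds c₋, c₊, then θ_{a,b} ≤ (c₊(a+b) − c₋(a+b))/2. -/
open Finset Matrix

/-- if X satisfies the SRC of order `a + b` with bounds `c₋, c₊`, then the
sparse orthogonality constant satisfies `θ_{a,b} ≤ (c₊ − c₋)/2`, i.e. the constant
`(c₊ − c₋)/2` makes the defining inequality hold over disjoint supports. -/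
theorem sparse_orthogonality_bound (N p a b : ℕ) (hN : 0 < N) (cm cp : ℝ)
    (X : Matrix (Fin N) (Fin p) ℝ)
    (hSRC : ∀ A : Finset (Fin p), A.Nonempty → A.card ≤ a + b →
      ∀ u : A → ℝ, u ≠ 0 →
        cm * ∑ i, u i ^ 2 ≤ (1 / (N : ℝ)) * ∑ k, (∑ i : A, X k i.val * u i) ^ 2 ∧
        (1 / (N : ℝ)) * ∑ k, (∑ i : A, X k i.val * u i) ^ 2 ≤ cp * ∑ i, u i ^ 2) :
    ∀ A B : Finset (Fin p), Disjoint A B → A.card ≤ a → B.card ≤ b →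
      ∀ u : B → ℝ,
        Real.sqrt (∑ i : A, (∑ k, X k i.val * ∑ j : B, X k j.val * u j) ^ 2)
          ≤ (N : ℝ) * ((cp - cm) / 2) * Real.sqrt (∑ j, u j ^ 2) := by
  intro A B hAB hA hB u
  by_cases hu : u = 0
  · subst hu; simp
  obtain ⟨j0, hj0⟩ : ∃ j, u j ≠ 0 := by
    by_contra h; push_neg at h; exact hu (funext h)
  have hBne : B.Nonempty := ⟨j0.1, j0.2⟩
  have hNpos : (0:ℝ) < N := by exact_mod_cast hN
  have hscale1 : ∀ x y : ℝ, (1 / (N : ℝ)) * x ≤ y → x ≤ (N : ℝ) * y := by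
    intro x y h
    have h' := mul_le_mul_of_nonneg_left h hNpos.le
    rwa [← mul_assoc, mul_one_div, div_self hNpos.ne', one_mul] at h'
  have hscale2 : ∀ x y : ℝ, y ≤ (1 / (N : ℝ)) * x → (N : ℝ) * y ≤ x := by
    intro x y h
    have h' := mul_le_mul_of_nonneg_left h hNpos.le
    rwa [← mul_assoc, mul_one_div, div_self hNpos.ne', one_mul] at h'
  -- positivity of ∑ u²
  have hT : (0:ℝ) < ∑ j : B, u j ^ 2 := by
    apply Finset.sum_pos' (fun i _ => sq_nonneg _)
    exact ⟨j0, Finset.mem_univ _, by positivity⟩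
  have hcmcp : cm ≤ cp := by
    have h := hSRC B hBne (le_trans hB (Nat.le_add_left b a)) u hu
    nlinarith [h.1, h.2]
  -- global versions of u
  set u' : Fin p → ℝ := fun (j : Fin p) => if h : j ∈ B then u ⟨j, h⟩ else 0 with hu'def
  have hu'supp : ∀ j, j ∉ B → u' j = 0 := fun j hj => dif_neg hj
  have hu'eq : ∀ j : B, u' j.1 = u j := fun j => dif_pos j.2
  have hu'j0 : u' j0.1 ≠ 0 := by rw [hu'eq j0]; exact hj0
  have hj0A : j0.1 ∉ A := fun h => (Finset.disjoint_left.mp hAB h) j0.2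
  have hRrew : ∀ k, (∑ j : B, X k j.1 * u j) = ∑ j ∈ B, X k j * u' j := by
    intro k
    rw [← Finset.sum_coe_sort B (fun j => X k j * u' j)]
    exact Finset.sum_congr rfl fun j _ => by rw [hu'eq j]
  have hUrew : (∑ j : B, u j ^ 2) = ∑ j ∈ B, u' j ^ 2 := by
    rw [← Finset.sum_coe_sort B (fun j => u' j ^ 2)]
    exact Finset.sum_congr rfl fun j _ => by rw [hu'eq j]
  -- the key bilinear bound from the parallelogram identity
  have key : ∀ v' : Fin p → ℝ, (∀ i, i ∉ A → v' i = 0) →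
      ∑ k, (∑ i ∈ A, X k i * v' i) * (∑ j ∈ B, X k j * u' j)
        ≤ ((N : ℝ) * (cp - cm) / 4) *
          ((∑ i ∈ A, v' i ^ 2) + ∑ j ∈ B, u' j ^ 2) := by
    intro v' hv'supp
    set S := A ∪ B with hS
    have hSne : S.Nonempty := ⟨j0.1, Finset.mem_union_right _ j0.2⟩
    have hScard : S.card ≤ a + b :=
      le_trans (Finset.card_union_le A B) (Nat.add_le_add hA hB)
    set T : ℝ := (∑ i ∈ A, v' i ^ 2) + ∑ j ∈ B, u' j ^ 2 with hTdef
    have core : ∀ ε : ℝ, ε = 1 ∨ ε = -1 →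
        cm * T
          ≤ (1 / (N : ℝ)) * ∑ k, ((∑ i ∈ A, X k i * v' i) + ε * (∑ j ∈ B, X k j * u' j)) ^ 2 ∧
        (1 / (N : ℝ)) * ∑ k, ((∑ i ∈ A, X k i * v' i) + ε * (∑ j ∈ B, X k j * u' j)) ^ 2
          ≤ cp * T := by
      intro ε hε
      have hε2 : ε ^ 2 = 1 := by rcases hε with h | h <;> rw [h] <;> norm_num
      have hεne : ε ≠ 0 := by rcases hε with h | h <;> rw [h] <;> norm_num
      set w : S → ℝ := fun i => v' i.1 + ε * u' i.1 with hw
      have hwne : w ≠ 0 := by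
        intro h
        have h2 := congrFun h ⟨j0.1, Finset.mem_union_right _ j0.2⟩
        simp only [hw, Pi.zero_apply] at h2
        rw [hv'supp _ hj0A] at h2
        have h3 : ε * u' j0.1 = 0 := by linarith
        rcases mul_eq_zero.mp h3 with h4 | h4
        · exact hεne h4
        · exact hu'j0 h4
      have hAin : ∀ i ∈ A, i ∉ B := fun i hi => Finset.disjoint_left.mp hAB hi
      have hBin : ∀ j ∈ B, j ∉ A := fun j hj => fun h => (Finset.disjoint_left.mp hAB h) hj
      have hsum1 : ∀ k, (∑ i : S, X k i.1 * w i)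
          = (∑ i ∈ A, X k i * v' i) + ε * (∑ j ∈ B, X k j * u' j) := by
        intro k
        have e : (∑ i : S, X k i.1 * w i)
            = ∑ i ∈ S, X k i * (v' i + ε * u' i) :=
          Finset.sum_coe_sort S (fun i => X k i * (v' i + ε * u' i))
        rw [e, hS, Finset.sum_union hAB, Finset.mul_sum]
        congr 1
        · exact Finset.sum_congr rfl fun i hi => by
            rw [hu'supp i (hAin i hi)]; ring
        · exact Finset.sum_congr rfl fun j hj => by
            rw [hv'supp j (hBin j hj)]; ring
      have hsum2 : (∑ i : S, w i ^ 2) = T := by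
        have e : (∑ i : S, w i ^ 2) = ∑ i ∈ S, (v' i + ε * u' i) ^ 2 :=
          Finset.sum_coe_sort S (fun i => (v' i + ε * u' i) ^ 2)
        rw [e, hS, Finset.sum_union hAB, hTdef]
        congr 1
        · exact Finset.sum_congr rfl fun i hi => by rw [hu'supp i (hAin i hi)]; ring
        · exact Finset.sum_congr rfl fun j hj => by
            rw [hv'supp j (hBin j hj)]
            nlinarith [hε2]
      have h := hSRC S hSne hScard w hwne
      have hsq : (∑ k, (∑ i : S, X k i.1 * w i) ^ 2)
          = ∑ k, ((∑ i ∈ A, X k i * v' i) + ε * (∑ j ∈ B, X k j * u' j)) ^ 2 :=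
        Finset.sum_congr rfl fun k _ => by rw [hsum1 k]
      constructor
      · have h1 := h.1
        rw [hsum2, hsq] at h1
        exact h1
      · have h2 := h.2
        rw [hsum2, hsq] at h2
        exact h2
    have h1 := (core 1 (Or.inl rfl)).2
    have h2 := (core (-1) (Or.inr rfl)).1
    set Q1 : ℝ := ∑ k, ((∑ i ∈ A, X k i * v' i) + 1 * (∑ j ∈ B, X k j * u' j)) ^ 2 with hQ1def
    set Q2 : ℝ := ∑ k, ((∑ i ∈ A, X k i * v' i) + (-1) * (∑ j ∈ B, X k j * u' j)) ^ 2 with hQ2def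
    have hpar : Q1 - Q2
        = 4 * ∑ k, (∑ i ∈ A, X k i * v' i) * (∑ j ∈ B, X k j * u' j) := by
      rw [hQ1def, hQ2def, ← Finset.sum_sub_distrib, Finset.mul_sum]
      exact Finset.sum_congr rfl fun k _ => by ring
    have hq1 : Q1 ≤ (N : ℝ) * (cp * T) := hscale1 _ _ h1
    have hq2 : (N : ℝ) * (cm * T) ≤ Q2 := hscale2 _ _ h2
    clear_value T Q1 Q2
    calc ∑ k, (∑ i ∈ A, X k i * v' i) * (∑ j ∈ B, X k j * u' j)
        = (Q1 - Q2) / 4 := by linarith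
      _ ≤ ((N : ℝ) * (cp * T) - (N : ℝ) * (cm * T)) / 4 := by linarith
      _ = (N : ℝ) * (cp - cm) / 4 * T := by ring
  -- now the vector w' = X_Aᵀ X_B u, extended by zero
  set w' : Fin p → ℝ := fun (i : Fin p) =>
    if i ∈ A then (∑ k, X k i * ∑ j ∈ B, X k j * u' j) else 0 with hw'def
  have hw'supp : ∀ i, i ∉ A → w' i = 0 := fun i hi => if_neg hi
  have hw'eq : ∀ i ∈ A, w' i = ∑ k, X k i * ∑ j ∈ B, X k j * u' j :=
    fun i hi => if_pos hi
  have hLHS : (∑ i : A, (∑ k, X k i.1 * ∑ j : B, X k j.1 * u j) ^ 2)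
      = ∑ i ∈ A, w' i ^ 2 := by
    rw [← Finset.sum_coe_sort A (fun i => w' i ^ 2)]
    refine Finset.sum_congr rfl fun i _ => ?_
    rw [hw'eq i.1 i.2]
    congr 1
    exact Finset.sum_congr rfl fun k _ => by rw [hRrew k]
  have hIP : (∑ i ∈ A, w' i ^ 2)
      = ∑ k, (∑ i ∈ A, X k i * w' i) * (∑ j ∈ B, X k j * u' j) := by
    calc (∑ i ∈ A, w' i ^ 2)
        = ∑ i ∈ A, w' i * ∑ k, X k i * (∑ j ∈ B, X k j * u' j) := by
          refine Finset.sum_congr rfl fun i hi => ?_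
          rw [← hw'eq i hi]; ring
      _ = ∑ i ∈ A, ∑ k, (X k i * w' i) * (∑ j ∈ B, X k j * u' j) := by
          refine Finset.sum_congr rfl fun i hi => ?_
          rw [Finset.mul_sum]
          exact Finset.sum_congr rfl fun k _ => by ring
      _ = ∑ k, ∑ i ∈ A, (X k i * w' i) * (∑ j ∈ B, X k j * u' j) := Finset.sum_comm
      _ = ∑ k, (∑ i ∈ A, X k i * w' i) * (∑ j ∈ B, X k j * u' j) := by
          refine Finset.sum_congr rfl fun k _ => ?_
          rw [Finset.sum_mul]
  set W2 : ℝ := ∑ i ∈ A, w' i ^ 2 with hW2def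
  set U2 : ℝ := ∑ j ∈ B, u' j ^ 2 with hU2def
  have hU2pos : 0 < U2 := by rw [← hUrew]; exact hT
  have hW2nonneg : 0 ≤ W2 := Finset.sum_nonneg fun i _ => sq_nonneg _
  rw [hLHS, hUrew]
  set W : ℝ := Real.sqrt W2 with hWdef
  set U : ℝ := Real.sqrt U2 with hUdef
  have hUpos : 0 < U := Real.sqrt_pos.mpr hU2pos
  have hU2' : U ^ 2 = U2 := Real.sq_sqrt hU2pos.le
  have hW2' : W ^ 2 = W2 := Real.sq_sqrt hW2nonneg
  by_cases hW0 : W2 = 0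
  · rw [hWdef, hW0, Real.sqrt_zero]
    have h0 : (0:ℝ) ≤ (N : ℝ) * ((cp - cm) / 2) := by
      apply mul_nonneg hNpos.le; linarith
    exact mul_nonneg h0 (Real.sqrt_nonneg _)
  · have hW2pos : 0 < W2 := lt_of_le_of_ne hW2nonneg (Ne.symm hW0)
    have hWpos : 0 < W := Real.sqrt_pos.mpr hW2pos
    have hWne : W ≠ 0 := hWpos.ne'
    set t : ℝ := U / W with htdef
    have htpos : 0 < t := div_pos hUpos hWpos
    have hkey := key (fun i => t * w' i)
      (fun i hi => by show t * w' i = 0; rw [hw'supp i hi]; ring)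
    have e1 : ∀ k, (∑ i ∈ A, X k i * (t * w' i)) = t * ∑ i ∈ A, X k i * w' i := by
      intro k
      rw [Finset.mul_sum]
      exact Finset.sum_congr rfl fun i _ => by ring
    have e2 : (∑ i ∈ A, (t * w' i) ^ 2) = t ^ 2 * W2 := by
      rw [hW2def, Finset.mul_sum]
      exact Finset.sum_congr rfl fun i _ => by ring
    have e3 : (∑ k, (∑ i ∈ A, X k i * (t * w' i)) * (∑ j ∈ B, X k j * u' j))
        = t * W2 := by
      calc (∑ k, (∑ i ∈ A, X k i * (t * w' i)) * (∑ j ∈ B, X k j * u' j))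
          = ∑ k, t * ((∑ i ∈ A, X k i * w' i) * (∑ j ∈ B, X k j * u' j)) := by
            refine Finset.sum_congr rfl fun k _ => ?_
            rw [e1 k]; ring
        _ = t * ∑ k, (∑ i ∈ A, X k i * w' i) * (∑ j ∈ B, X k j * u' j) := by
            rw [Finset.mul_sum]
        _ = t * W2 := by rw [← hIP]
    rw [e3, e2] at hkey
    -- hkey : t * W2 ≤ (N * (cp - cm) / 4) * (t ^ 2 * W2 + U2)
    have ht2 : t ^ 2 * W2 = U2 := by
      rw [htdef, ← hW2', ← hU2', div_pow, div_mul_cancel₀ _ (pow_ne_zero 2 hWne)]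
    have htW : t * W2 = U * W := by
      rw [htdef, ← hW2']
      field_simp
    rw [ht2, htW] at hkey
    -- hkey : U * W ≤ (N * (cp - cm) / 4) * (U2 + U2)
    have hfin : U * W ≤ U * ((N : ℝ) * ((cp - cm) / 2) * U) := by
      rw [← hU2'] at hkey
      nlinarith [hkey]
    exact (mul_le_mul_iff_of_pos_left hUpos).mp hfin
end

section
/- Let 0 < γ < 1 and suppose the sequence (β^{(k)}) satisfies ‖β*|_{A*∖A^{(k+1)}}‖₂ ≤ γ‖β*|_{A*∖A^{(k)}}‖₂ + C for all k, where C ≥ 0. If at some step k₀ the term γ^{k₀}·√s·‖β*_{A*}‖_∞ ≤ C holds, then ‖β*|_{A*∖A^{(k₀+1)}}‖₂ ≤ C/(1−γ) + C. In particular if every nonzero coordinate of β* satisfies |β*_i| > C/(1−γ) + C, then A^{(k₀+1)} ⊇ A*. -/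
open Finset

/-- support-recovery recursion: if
`‖β*|_{A*∖A^{(k+1)}}‖₂ ≤ γ‖β*|_{A*∖A^{(k)}}‖₂ + C` and at step `k₀` one has
`γ^{k₀}·√s·‖β*_{A*}‖_∞ ≤ C`, then `‖β*|_{A*∖A^{(k₀+1)}}‖₂ ≤ C/(1−γ) + C`; in particular,
if every nonzero coordinate of β* exceeds `C/(1−γ) + C` in magnitude, then
`A^{(k₀+1)} ⊇ A*`. -/
theorem support_recovery_recursion (p : ℕ) (γ C : ℝ)
    (hγ0 : 0 < γ) (hγ1 : γ < 1) (hC : 0 ≤ C)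
    (βstar : Fin p → ℝ)
    (Astar : Finset (Fin p)) (hAstar : Astar = univ.filter fun i => βstar i ≠ 0)
    (hne : Astar.Nonempty)
    (A : ℕ → Finset (Fin p))
    (hrec : ∀ k : ℕ,
      Real.sqrt (∑ i ∈ Astar \ A (k + 1), βstar i ^ 2)
        ≤ γ * Real.sqrt (∑ i ∈ Astar \ A k, βstar i ^ 2) + C)
    (k₀ : ℕ)
    (hk₀ : γ ^ k₀ * Real.sqrt (Astar.card) * (Astar.sup' hne fun i => |βstar i|) ≤ C) :
    Real.sqrt (∑ i ∈ Astar \ A (k₀ + 1), βstar i ^ 2) ≤ C / (1 - γ) + C ∧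
    ((∀ i, βstar i ≠ 0 → C / (1 - γ) + C < |βstar i|) → Astar ⊆ A (k₀ + 1)) := by
  set M := Astar.sup' hne fun i => |βstar i| with hMdef
  obtain ⟨j, hj⟩ := hne
  have hM0 : 0 ≤ M := le_trans (abs_nonneg (βstar j)) (Finset.le_sup' (fun i => |βstar i|) hj)
  set S := Real.sqrt Astar.card * M with hSdef
  have h1γ : (0:ℝ) < 1 - γ := by linarith
  have hf : ∀ k, Real.sqrt (∑ i ∈ Astar \ A k, βstar i ^ 2) ≤ γ ^ k * S + C / (1 - γ) := by
    intro k
    induction k with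
    | zero =>
      have h1 : (∑ i ∈ Astar \ A 0, βstar i ^ 2) ≤ (Astar.card : ℝ) * M ^ 2 := by
        calc ∑ i ∈ Astar \ A 0, βstar i ^ 2 ≤ ∑ i ∈ Astar, βstar i ^ 2 :=
              Finset.sum_le_sum_of_subset_of_nonneg (sdiff_subset) (fun i _ _ => sq_nonneg _)
          _ ≤ ∑ _i ∈ Astar, M ^ 2 := by
              apply Finset.sum_le_sum
              intro i hi
              have h := Finset.le_sup' (fun i => |βstar i|) hi
              calc βstar i ^ 2 = |βstar i| ^ 2 := (sq_abs _).symm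
                _ ≤ M ^ 2 := by nlinarith [abs_nonneg (βstar i)]
          _ = (Astar.card : ℝ) * M ^ 2 := by
              rw [Finset.sum_const, nsmul_eq_mul]
      have h2 : Real.sqrt (∑ i ∈ Astar \ A 0, βstar i ^ 2) ≤ S := by
        calc Real.sqrt (∑ i ∈ Astar \ A 0, βstar i ^ 2)
            ≤ Real.sqrt ((Astar.card : ℝ) * M ^ 2) := Real.sqrt_le_sqrt h1
          _ = Real.sqrt Astar.card * M := by
              rw [Real.sqrt_mul (by positivity), Real.sqrt_sq hM0]
      have : (0:ℝ) ≤ C / (1 - γ) := by positivity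
      simpa using le_trans h2 (by linarith)
    | succ k ih =>
      have h3 := hrec k
      have h4 : γ * Real.sqrt (∑ i ∈ Astar \ A k, βstar i ^ 2)
          ≤ γ * (γ ^ k * S + C / (1 - γ)) :=
        mul_le_mul_of_nonneg_left ih hγ0.le
      have h5 : γ * (γ ^ k * S + C / (1 - γ)) + C = γ ^ (k + 1) * S + C / (1 - γ) := by
        field_simp
        ring
      linarith
  have hmain : Real.sqrt (∑ i ∈ Astar \ A (k₀ + 1), βstar i ^ 2) ≤ C / (1 - γ) + C := by
    have h6 := hf (k₀ + 1)
    have h7 : γ ^ (k₀ + 1) * S = γ * (γ ^ k₀ * Real.sqrt Astar.card * M) := by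
      rw [hSdef]; ring
    have h8 : γ ^ (k₀ + 1) * S ≤ γ * C := by
      rw [h7]; exact mul_le_mul_of_nonneg_left hk₀ hγ0.le
    have h9 : γ * C ≤ C := by nlinarith
    linarith
  refine ⟨hmain, fun hbig i hi => ?_⟩
  by_contra hnot
  have hiA : i ∈ Astar \ A (k₀ + 1) := Finset.mem_sdiff.mpr ⟨hi, hnot⟩
  have hi0 : βstar i ≠ 0 := by
    rw [hAstar] at hi
    exact (Finset.mem_filter.mp hi).2
  have h10 : βstar i ^ 2 ≤ ∑ x ∈ Astar \ A (k₀ + 1), βstar x ^ 2 :=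
    Finset.single_le_sum (fun x _ => sq_nonneg (βstar x)) hiA
  have h11 : |βstar i| ≤ Real.sqrt (∑ x ∈ Astar \ A (k₀ + 1), βstar x ^ 2) := by
    rw [← Real.sqrt_sq_eq_abs]
    exact Real.sqrt_le_sqrt h10
  have := hbig i hi0
  linarith
end
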